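/- arXiv:1810.10168 — 7 statements merged into one kernel-verified Lean document; each statement's English description precedes it below -/
import Mathlib

section
/- Let m > 0 and define F : (0,∞) → ℝ by F(ρ) = 1 + m/(2ρ). Let ρ, c : [0,∞) → ℝ be differentiable functions such that for every s ≥ 0: ρ(s) > 0, 0 < c(s) ≤ 1, ρ'(s) = c(s)/F(ρ(s))², and c'(s) ≥ (√(1 − c(s)²)/(F(ρ(s))²·ρ(s)))·(√(1 − c(s)²) − m/(F(ρ(s))·ρ(s))). If c(0) > 1/√3 and ρ(0) > 3m, then ρ is strictly increasing on [0,∞), and c(s) > 1/√3 and ρ(s) > 3m for every s ≥ 0. -/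
open Real Set Filter Topology

/-!
Along the flow line `ρ' = c / F(ρ)² > 0`, so `ρ` increases and stays above `3m`. For `ρ > 3m`
the mass term `m / (F(ρ) ρ)` is below `1/3`, while `c² ≤ 1/3` gives `√(1 - c²) > 1/3`; hence
the differential inequality forces `c' > 0` whenever `c = 1/√3`, so `c` can never come down
to the barrier `1/√3`.
-/

theorem lt_of_deriv_pos_at_level {f : ℝ → ℝ} {t₀ a : ℝ}
    (hf : ∀ t, t₀ ≤ t → DifferentiableAt ℝ f t) (h₀ : a < f t₀)
    (hderiv : ∀ t, t₀ ≤ t → f t = a → 0 < deriv f t) :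
    ∀ t, t₀ ≤ t → a < f t := by
  have hle : ∀ t, t₀ ≤ t → a ≤ f t := fun t ht =>
    image_le_of_deriv_right_lt_deriv_boundary' (f := fun _ => a) (f' := fun _ => 0)
      continuousOn_const (fun _ _ => hasDerivWithinAt_const _ _ _) h₀.le
      (fun x hx => (hf x hx.1).continuousAt.continuousWithinAt)
      (fun x hx => (hf x hx.1).hasDerivAt.hasDerivWithinAt)
      (fun x hx hfx => hderiv x hx.1 hfx.symm) ⟨ht, le_rfl⟩
  intro t ht
  refine (hle t ht).lt_of_ne fun hat => ?_
  obtain rfl | ht' := ht.eq_or_lt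
  · exact h₀.ne hat
  have hmin : IsLocalMin f t :=
    Filter.mem_of_superset (Ioi_mem_nhds ht') fun x hx => hat ▸ hle x (le_of_lt hx)
  exact (hderiv t ht hat.symm).ne' hmin.deriv_eq_zero

theorem mass_ratio_lt_one_third {m r : ℝ} (hm : 0 < m) (hr : 3 * m < r) :
    m / ((1 + m / (2 * r)) * r) < 1 / 3 := by
  have hr0 : 0 < r := by linarith
  have hFr : (1 + m / (2 * r)) * r = r + m / 2 := by field_simp
  rw [hFr, div_lt_div_iff₀ (by linarith) (by norm_num)]
  linarith

theorem schwarzschild_angle_rhs_pos {m r c : ℝ} (hm : 0 < m) (hr : 3 * m < r)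
    (hc : c ^ 2 ≤ 1 / 3) :
    0 < √(1 - c ^ 2) / ((1 + m / (2 * r)) ^ 2 * r) *
      (√(1 - c ^ 2) - m / ((1 + m / (2 * r)) * r)) := by
  have hr0 : 0 < r := by linarith
  have hsqrt : 1 / 3 < √(1 - c ^ 2) := lt_sqrt_of_sq_lt (by linarith)
  have hmass := mass_ratio_lt_one_third hm hr
  exact mul_pos (div_pos (by linarith) (by positivity)) (by linarith)

theorem schwarzschild_tangent_angle_barrier_general
    (m : ℝ) (hm : 0 < m)
    (ρ c : ℝ → ℝ)
    (hρpos : ∀ s, 0 ≤ s → 0 < ρ s)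
    (hcpos : ∀ s, 0 ≤ s → 0 < c s)
    (hρ' : ∀ s, 0 ≤ s → HasDerivAt ρ (c s / (1 + m / (2 * ρ s)) ^ 2) s)
    (hcdiff : ∀ s, 0 ≤ s → DifferentiableAt ℝ c s)
    (hc' : ∀ s, 0 ≤ s → deriv c s ≥
      (Real.sqrt (1 - c s ^ 2) / ((1 + m / (2 * ρ s)) ^ 2 * ρ s)) *
        (Real.sqrt (1 - c s ^ 2) - m / ((1 + m / (2 * ρ s)) * ρ s)))
    (hc0 : c 0 > 1 / Real.sqrt 3)
    (hρ0 : ρ 0 > 3 * m) :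
    StrictMonoOn ρ (Set.Ici 0) ∧
      ∀ s, 0 ≤ s → c s > 1 / Real.sqrt 3 ∧ ρ s > 3 * m := by
  have hmono : StrictMonoOn ρ (Ici 0) := by
    refine strictMonoOn_of_deriv_pos (convex_Ici 0)
      (fun s hs => (hρ' s hs).continuousAt.continuousWithinAt) fun s hs => ?_
    rw [interior_Ici] at hs
    have := hρpos s hs.le
    rw [(hρ' s hs.le).deriv]
    exact div_pos (hcpos s hs.le) (by positivity)
  have hρ3m : ∀ s, 0 ≤ s → 3 * m < ρ s := fun s hs =>
    hs.eq_or_lt.elim (fun h => h ▸ hρ0) fun h => hρ0.trans (hmono self_mem_Ici hs h)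
  have hbarrier : ∀ s, 0 ≤ s → c s = 1 / √3 → 0 < deriv c s := fun s hs hcs =>
    have hcsq : c s ^ 2 ≤ 1 / 3 := by rw [hcs, div_pow, sq_sqrt] <;> norm_num
    (schwarzschild_angle_rhs_pos hm (hρ3m s hs) hcsq).trans_le (hc' s hs)
  exact ⟨hmono, fun s hs =>
    ⟨lt_of_deriv_pos_at_level hcdiff hc0 hbarrier s hs, hρ3m s hs⟩⟩

/-- Tangent-angle barrier for the flow in the Schwarzschild manifold
(Proposition 5.1). With `F(ρ) = 1 + m/(2ρ)`, suppose along the flow line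
`ρ' = c / F(ρ)²` and `c' ≥ (√(1−c²)/(F(ρ)²ρ))(√(1−c²) − m/(F(ρ)ρ))`, with
`0 < c ≤ 1` and `ρ > 0`. If `c(0) > 1/√3` and `ρ(0) > 3m`, then `ρ` is strictly
increasing on `[0,∞)` and `c(s) > 1/√3`, `ρ(s) > 3m` for all `s ≥ 0`. -/
theorem schwarzschild_tangent_angle_barrier
    (m : ℝ) (hm : 0 < m)
    (ρ c : ℝ → ℝ)
    (hρpos : ∀ s, 0 ≤ s → 0 < ρ s)
    (hcpos : ∀ s, 0 ≤ s → 0 < c s)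
    (hcle : ∀ s, 0 ≤ s → c s ≤ 1)
    (hρ' : ∀ s, 0 ≤ s → HasDerivAt ρ (c s / (1 + m / (2 * ρ s)) ^ 2) s)
    (hcdiff : ∀ s, 0 ≤ s → DifferentiableAt ℝ c s)
    (hc' : ∀ s, 0 ≤ s → deriv c s ≥
      (Real.sqrt (1 - c s ^ 2) / ((1 + m / (2 * ρ s)) ^ 2 * ρ s)) *
        (Real.sqrt (1 - c s ^ 2) - m / ((1 + m / (2 * ρ s)) * ρ s)))
    (hc0 : c 0 > 1 / Real.sqrt 3)
    (hρ0 : ρ 0 > 3 * m) :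
    StrictMonoOn ρ (Set.Ici 0) ∧
      ∀ s, 0 ≤ s → c s > 1 / Real.sqrt 3 ∧ ρ s > 3 * m :=
  schwarzschild_tangent_angle_barrier_general m hm ρ c hρpos hcpos hρ' hcdiff hc' hc0 hρ0
end

section
/- Let m > 0 and define F : (0,∞) → ℝ by F(ρ) = 1 + m/(2ρ). Let ρ, c, K : [0,∞) → ℝ be differentiable functions such that for every s ≥ 0: ρ(s) > 0, ρ is nondecreasing, c(s) > 1/√3, and K'(s) ≥ (1/(ρ(s)·F(ρ(s))²))·(2·c(s)·K(s) − K(s)²/ρ(s) − m). If ρ(0) > 3m and K(0) > √3·m, then K(s) > √3·m for every s ≥ 0. -/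
/-!
At a time `t` where `K` touches the level `√3 m`, monotonicity gives `ρ t > 3m`, so
`K²/ρ = 3m²/ρ < m`, while `c > 1/√3` gives `2cK > 2m`; hence the right-hand side of the
differential inequality, and with it `K' t`, is positive, and `K` cannot reach the level.
-/

open Set

/-- The fencing theorem gives `B ≤ f`; a contact point `f x = B` with `x > a` would then be an
interior local minimum, forcing `deriv f x = 0`. -/
theorem const_lt_image_of_deriv_pos_boundary {f : ℝ → ℝ} {a B : ℝ}
    (hf : ∀ x, a ≤ x → DifferentiableAt ℝ f x) (ha : B < f a)
    (bound : ∀ x, a ≤ x → f x = B → 0 < deriv f x) :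
    ∀ x, a ≤ x → B < f x := by
  have hle : ∀ x, a ≤ x → B ≤ f x := fun x hax =>
    image_le_of_deriv_right_lt_deriv_boundary' (f := fun _ => B) (f' := fun _ => 0)
      continuousOn_const (fun _ _ => hasDerivWithinAt_const _ _ _) ha.le
      (fun y hy => (hf y hy.1).continuousAt.continuousWithinAt)
      (fun y hy => (hf y hy.1).hasDerivAt.hasDerivWithinAt)
      (fun y hy hfy => bound y hy.1 hfy.symm) ⟨hax, le_rfl⟩
  intro x hax
  refine (hle x hax).lt_of_ne fun hBx => (bound x hax hBx.symm).ne' ?_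
  have hx : a < x := hax.lt_of_ne (by rintro rfl; exact ha.ne hBx)
  have hmin : IsLocalMin f x :=
    Filter.mem_of_superset (Ioi_mem_nhds hx) fun y hy => hBx ▸ hle y (le_of_lt hy)
  exact hmin.deriv_eq_zero

theorem curvature_rhs_pos_at_sqrt_three_mul {m ρ c : ℝ} (hm : 0 < m) (hρ : 3 * m < ρ)
    (hc : 1 / Real.sqrt 3 < c) :
    0 < 1 / (ρ * (1 + m / (2 * ρ)) ^ 2) *
      (2 * c * (Real.sqrt 3 * m) - (Real.sqrt 3 * m) ^ 2 / ρ - m) := by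
  have hρpos : 0 < ρ := by linarith
  have hsqrt : 0 < Real.sqrt 3 := by positivity
  have hsq : Real.sqrt 3 ^ 2 = 3 := Real.sq_sqrt (by norm_num)
  have hcs : 1 < c * Real.sqrt 3 := by rwa [div_lt_iff₀ hsqrt] at hc
  have hquad : (Real.sqrt 3 * m) ^ 2 / ρ < m := by
    rw [div_lt_iff₀ hρpos, mul_pow, hsq]
    nlinarith
  have hlin : 2 * m < 2 * c * (Real.sqrt 3 * m) := by nlinarith
  have hfactor : 0 < 1 / (ρ * (1 + m / (2 * ρ)) ^ 2) := by positivity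
  exact mul_pos hfactor (by linarith)

theorem schwarzschild_principal_curvature_barrier_general
    (m : ℝ) (hm : 0 < m)
    (ρ c K : ℝ → ℝ)
    (hKdiff : ∀ s, 0 ≤ s → DifferentiableAt ℝ K s)
    (hρmono : MonotoneOn ρ (Set.Ici 0))
    (hc : ∀ s, 0 ≤ s → c s > 1 / Real.sqrt 3)
    (hK' : ∀ s, 0 ≤ s → deriv K s ≥
      (1 / (ρ s * (1 + m / (2 * ρ s)) ^ 2)) *
        (2 * c s * K s - K s ^ 2 / ρ s - m))
    (hρ0 : ρ 0 > 3 * m)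
    (hK0 : K 0 > Real.sqrt 3 * m) :
    ∀ s, 0 ≤ s → K s > Real.sqrt 3 * m := by
  refine const_lt_image_of_deriv_pos_boundary hKdiff hK0 fun t ht hKt => ?_
  have hρt : 3 * m < ρ t := hρ0.trans_le (hρmono self_mem_Ici ht ht)
  have hK't := hK' t ht
  rw [hKt] at hK't
  exact (curvature_rhs_pos_at_sqrt_three_mul hm hρt (hc t ht)).trans_le hK't

/-- Principal-curvature barrier for the flow in the Schwarzschild manifold
(Proposition 5.1). With `F(ρ) = 1 + m/(2ρ)` and `K = κ̃ρ²`, suppose along the flow line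
`ρ > 0`, `ρ` is nondecreasing, `c > 1/√3`, and
`K' ≥ (1/(ρ F(ρ)²))(2cK − K²/ρ − m)`. If `ρ(0) > 3m` and `K(0) > √3 m`, then
`K(s) > √3 m` for all `s ≥ 0`. -/
theorem schwarzschild_principal_curvature_barrier
    (m : ℝ) (hm : 0 < m)
    (ρ c K : ℝ → ℝ)
    (hρdiff : ∀ s, 0 ≤ s → DifferentiableAt ℝ ρ s)
    (hcdiff : ∀ s, 0 ≤ s → DifferentiableAt ℝ c s)
    (hKdiff : ∀ s, 0 ≤ s → DifferentiableAt ℝ K s)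
    (hρpos : ∀ s, 0 ≤ s → 0 < ρ s)
    (hρmono : MonotoneOn ρ (Set.Ici 0))
    (hc : ∀ s, 0 ≤ s → c s > 1 / Real.sqrt 3)
    (hK' : ∀ s, 0 ≤ s → deriv K s ≥
      (1 / (ρ s * (1 + m / (2 * ρ s)) ^ 2)) *
        (2 * c s * K s - K s ^ 2 / ρ s - m))
    (hρ0 : ρ 0 > 3 * m)
    (hK0 : K 0 > Real.sqrt 3 * m) :
    ∀ s, 0 ≤ s → K s > Real.sqrt 3 * m :=
  schwarzschild_principal_curvature_barrier_general m hm ρ c K hKdiff hρmono hc hK' hρ0 hK0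
end

section
/- Let F : (0,∞) → (0,∞) be a continuous function, let C₃ > 0 be a constant, and let G₀ ∈ (0,1). Let ρ, c : [0,∞) → ℝ be differentiable functions such that for every s ≥ 0: ρ(s) > 0, 0 < c(s) ≤ 1, ρ'(s) = c(s)/F(ρ(s))², and c'(s) ≥ (√(1 − c(s)²)/(F(ρ(s))²·ρ(s)))·(√(1 − c(s)²) − C₃/ρ(s)). If c(0) > G₀ and ρ(0) > C₃/√(1 − G₀²), then ρ is strictly increasing on [0,∞) and c(s) > G₀ for every s ≥ 0. -/
/-!
Since `c > 0`, `ρ' = c / F(ρ)² > 0`, so `ρ` increases and `ρ(s) > ρ(0) > C₃ / √(1 - G₀²)` for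
`s > 0`. At a first time `s` with `c(s) = G₀` this gives `C₃ / ρ(s) < √(1 - c(s)²)`, so the
differential inequality makes `c'(s) > 0`; but `c` approaches `G₀` from above at such a time,
which forces `c'(s) ≤ 0`. Hence `c` never reaches `G₀`.
-/

open Filter Set Topology

theorem eventually_lt_of_deriv_pos {f : ℝ → ℝ} {x₀ : ℝ} (hf : 0 < deriv f x₀) :
    ∀ᶠ x in 𝓝[<] x₀, f x < f x₀ := by
  have hslope := hasDerivAt_iff_tendsto_slope.mp
    (differentiableAt_of_deriv_ne_zero hf.ne').hasDerivAt
  filter_upwards [nhdsLT_le_nhdsNE x₀ (hslope.eventually (eventually_gt_nhds hf)),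
    self_mem_nhdsWithin] with x hx (hxx₀ : x < x₀)
  exact (slope_pos_iff_gt hxx₀).mp hx

theorem lt_of_deriv_pos_of_eq {f : ℝ → ℝ} {a t₀ : ℝ} (hf : ContinuousOn f (Ici t₀))
    (h₀ : a < f t₀) (hderiv : ∀ s, t₀ < s → f s = a → 0 < deriv f s) :
    ∀ s, t₀ ≤ s → a < f s := by
  by_contra! hbad
  obtain ⟨s₁, hs₁, hfs₁⟩ := hbad
  set S := Ici t₀ ∩ f ⁻¹' Iic a
  have hSbdd : BddBelow S := ⟨t₀, fun _ hx => hx.1⟩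
  obtain ⟨hs₀, hfs₀⟩ : sInf S ∈ S :=
    (hf.preimage_isClosed_of_isClosed isClosed_Ici isClosed_Iic).csInf_mem ⟨s₁, hs₁, hfs₁⟩ hSbdd
  set s₀ := sInf S
  have hbefore : ∀ t ∈ Ico t₀ s₀, a < f t := fun t ht =>
    not_le.mp fun hft => ht.2.not_ge (csInf_le hSbdd ⟨ht.1, hft⟩)
  have ht₀s₀ : t₀ < s₀ := lt_of_le_of_ne hs₀ fun h => (h ▸ h₀).not_ge hfs₀
  have hleft : ∀ᶠ t in 𝓝[<] s₀, a < f t := by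
    rw [← nhdsWithin_Ico_eq_nhdsLT ht₀s₀]
    exact eventually_mem_nhdsWithin.mono hbefore
  have hcont : Tendsto f (𝓝[<] s₀) (𝓝 (f s₀)) := by
    rw [← nhdsWithin_Ico_eq_nhdsLT ht₀s₀]
    exact ((hf s₀ hs₀).mono Ico_subset_Ici_self).tendsto
  have hfa : f s₀ = a := le_antisymm hfs₀ (ge_of_tendsto hcont (hleft.mono fun _ => le_of_lt))
  obtain ⟨t, hlt, hgt⟩ :=
    ((eventually_lt_of_deriv_pos (hderiv s₀ ht₀s₀ hfa)).and hleft).exists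
  exact (hlt.trans_eq hfa).not_gt hgt

theorem static_tangent_angle_barrier_general
    (F : ℝ → ℝ)
    (hFpos : ∀ x, 0 < x → 0 < F x)
    (C₃ : ℝ)
    (G₀ : ℝ) (hG₀ : 0 < G₀) (hG₀' : G₀ < 1)
    (ρ c : ℝ → ℝ)
    (hρpos : ∀ s, 0 ≤ s → 0 < ρ s)
    (hcpos : ∀ s, 0 ≤ s → 0 < c s)
    (hρ' : ∀ s, 0 ≤ s → HasDerivAt ρ (c s / (F (ρ s)) ^ 2) s)
    (hcdiff : ∀ s, 0 ≤ s → DifferentiableAt ℝ c s)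
    (hc' : ∀ s, 0 ≤ s → deriv c s ≥
      (Real.sqrt (1 - c s ^ 2) / ((F (ρ s)) ^ 2 * ρ s)) *
        (Real.sqrt (1 - c s ^ 2) - C₃ / ρ s))
    (hc0 : c 0 > G₀)
    (hρ0 : ρ 0 > C₃ / Real.sqrt (1 - G₀ ^ 2)) :
    StrictMonoOn ρ (Set.Ici 0) ∧ ∀ s, 0 ≤ s → c s > G₀ := by
  have hρmono : StrictMonoOn ρ (Ici 0) := by
    refine strictMonoOn_of_deriv_pos (convex_Ici 0)
      (fun s hs => (hρ' s hs).continuousAt.continuousWithinAt) fun s hs => ?_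
    rw [interior_Ici] at hs
    rw [(hρ' s hs.le).deriv]
    exact div_pos (hcpos s hs.le) (pow_pos (hFpos _ (hρpos s hs.le)) 2)
  have hsqrt : 0 < Real.sqrt (1 - G₀ ^ 2) := Real.sqrt_pos.mpr (by nlinarith)
  refine ⟨hρmono, lt_of_deriv_pos_of_eq
    (fun s hs => (hcdiff s hs).continuousAt.continuousWithinAt) hc0 fun s hs hcs => ?_⟩
  have hρs : 0 < ρ s := hρpos s hs.le
  have hbarrier : C₃ / ρ s < Real.sqrt (1 - c s ^ 2) := by
    rw [hcs, div_lt_comm₀ hρs hsqrt]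
    exact hρ0.trans (hρmono self_mem_Ici hs.le hs)
  have hspeed : 0 < (F (ρ s)) ^ 2 * ρ s := mul_pos (pow_pos (hFpos _ hρs) 2) hρs
  have hsqrt_c : 0 < Real.sqrt (1 - c s ^ 2) := hcs ▸ hsqrt
  exact (mul_pos (div_pos hsqrt_c hspeed) (sub_pos.mpr hbarrier)).trans_le (hc' s hs.le)

/-- Tangent-angle barrier for the flow with normal speed `1/F²` in a
general spherically symmetric static manifold (Proposition 5.2). `F` is a positive
continuous function on `(0,∞)`, `C₃ > 0`, and `G₀ ∈ (0,1)` is a lower barrier for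
`cos θ`. Suppose along the flow line `ρ' = c / F(ρ)²` and
`c' ≥ (√(1−c²)/(F(ρ)²ρ))(√(1−c²) − C₃/ρ)`, with `0 < c ≤ 1` and `ρ > 0`.
If `c(0) > G₀` and `ρ(0) > C₃/√(1−G₀²)`, then `ρ` is strictly increasing on `[0,∞)`
and `c(s) > G₀` for all `s ≥ 0`. -/
theorem static_tangent_angle_barrier
    (F : ℝ → ℝ)
    (hFcont : ContinuousOn F (Set.Ioi 0))
    (hFpos : ∀ x, 0 < x → 0 < F x)
    (C₃ : ℝ) (hC₃ : 0 < C₃)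
    (G₀ : ℝ) (hG₀ : 0 < G₀) (hG₀' : G₀ < 1)
    (ρ c : ℝ → ℝ)
    (hρpos : ∀ s, 0 ≤ s → 0 < ρ s)
    (hcpos : ∀ s, 0 ≤ s → 0 < c s)
    (hcle : ∀ s, 0 ≤ s → c s ≤ 1)
    (hρ' : ∀ s, 0 ≤ s → HasDerivAt ρ (c s / (F (ρ s)) ^ 2) s)
    (hcdiff : ∀ s, 0 ≤ s → DifferentiableAt ℝ c s)
    (hc' : ∀ s, 0 ≤ s → deriv c s ≥
      (Real.sqrt (1 - c s ^ 2) / ((F (ρ s)) ^ 2 * ρ s)) *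
        (Real.sqrt (1 - c s ^ 2) - C₃ / ρ s))
    (hc0 : c 0 > G₀)
    (hρ0 : ρ 0 > C₃ / Real.sqrt (1 - G₀ ^ 2)) :
    StrictMonoOn ρ (Set.Ici 0) ∧ ∀ s, 0 ≤ s → c s > G₀ :=
  static_tangent_angle_barrier_general F hFpos C₃ G₀ hG₀ hG₀' ρ c hρpos hcpos hρ' hcdiff hc' hc0 hρ0
end

section
/- Let F : (0,∞) → (0,∞) be a function and let C > 0 be a constant. Let ρ, c, K : [0,∞) → ℝ be differentiable functions such that for every s ≥ 0: ρ(s) > 0, ρ is nondecreasing, c(s) > 1/√3, and K'(s) ≥ (1/(ρ(s)·F(ρ(s))²))·(2·c(s)·K(s) − K(s)²/ρ(s) − C). If ρ(0) > 3C and K(0) > √3·C, then K(s) > √3·C for every s ≥ 0. -/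
/-!
A continuous barrier argument: `K` cannot fall to the level `√3 C`, because at the first time it
reaches that level its derivative would be positive. The positivity comes from the differential
inequality: at `K = √3 C` one has `2 c K > 2 C` since `c > 1/√3`, and `K² / ρ = 3 C² / ρ < C`
since `ρ ≥ ρ(0) > 3 C` along the flow.
-/

open Set

theorem lt_of_deriv_pos_of_eq_s4 {K : ℝ → ℝ} {a L : ℝ}
    (hK : ∀ s, a ≤ s → DifferentiableAt ℝ K s) (ha : L < K a)
    (hderiv : ∀ s, a ≤ s → K s = L → 0 < deriv K s) :
    ∀ s, a ≤ s → L < K s := by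
  have hge : ∀ s, a ≤ s → L ≤ K s := fun s hs =>
    image_le_of_deriv_right_lt_deriv_boundary' (f := fun _ => L) (f' := fun _ => 0)
      continuousOn_const (fun _ _ => hasDerivWithinAt_const _ _ _) ha.le
      (fun x hx => (hK x hx.1).continuousAt.continuousWithinAt)
      (fun x hx => (hK x hx.1).hasDerivAt.hasDerivWithinAt)
      (fun x hx hx' => hderiv x hx.1 hx'.symm) ⟨hs, le_rfl⟩
  intro s hs
  refine (hge s hs).lt_of_ne fun hKs => ?_
  have has : a < s := hs.lt_of_ne fun has => by subst has; exact ha.ne hKs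
  have hmin : IsLocalMin K s :=
    Filter.mem_of_superset (Ioi_mem_nhds has) fun y hy => hKs ▸ hge y (le_of_lt hy)
  exact (hderiv s hs hKs.symm).ne' hmin.deriv_eq_zero

theorem barrier_inequality_rhs_pos {C ρ c : ℝ} (hC : 0 < C) (hρ : 3 * C < ρ)
    (hc : 1 / Real.sqrt 3 < c) :
    0 < 2 * c * (Real.sqrt 3 * C) - (Real.sqrt 3 * C) ^ 2 / ρ - C := by
  have hsqrt3 : 0 < Real.sqrt 3 := by positivity
  have hlinear : 2 * C < 2 * c * (Real.sqrt 3 * C) := by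
    have := mul_lt_mul_of_pos_right hc (mul_pos hsqrt3 hC)
    rw [one_div, inv_mul_cancel_left₀ hsqrt3.ne'] at this
    linarith
  have hquadratic : (Real.sqrt 3 * C) ^ 2 / ρ < C := by
    rw [mul_pow, Real.sq_sqrt zero_le_three, div_lt_iff₀ (by linarith)]
    nlinarith
  linarith

theorem static_principal_curvature_barrier_general
    (F : ℝ → ℝ) (hFpos : ∀ x, 0 < x → 0 < F x)
    (C : ℝ) (hC : 0 < C)
    (ρ c K : ℝ → ℝ)
    (hKdiff : ∀ s, 0 ≤ s → DifferentiableAt ℝ K s)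
    (hρmono : MonotoneOn ρ (Set.Ici 0))
    (hc : ∀ s, 0 ≤ s → c s > 1 / Real.sqrt 3)
    (hK' : ∀ s, 0 ≤ s → deriv K s ≥
      (1 / (ρ s * (F (ρ s)) ^ 2)) *
        (2 * c s * K s - K s ^ 2 / ρ s - C))
    (hρ0 : ρ 0 > 3 * C)
    (hK0 : K 0 > Real.sqrt 3 * C) :
    ∀ s, 0 ≤ s → K s > Real.sqrt 3 * C := by
  refine lt_of_deriv_pos_of_eq_s4 hKdiff hK0 fun s hs hKs => ?_
  have hρs : 3 * C < ρ s := hρ0.trans_le (hρmono self_mem_Ici hs hs)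
  have hρs_pos : 0 < ρ s := by linarith
  have hfactor : 0 < 1 / (ρ s * F (ρ s) ^ 2) := by
    have := hFpos _ hρs_pos
    positivity
  have hrhs := mul_pos hfactor (barrier_inequality_rhs_pos hC hρs (hc s hs))
  rw [← hKs] at hrhs
  exact hrhs.trans_le (hK' s hs)

/-- Principal-curvature barrier for the flow with normal speed `1/F²` in a
general spherically symmetric static manifold (Proposition 5.2). `F` is a positive
function on `(0,∞)` and `C > 0` a constant. With `K = κ̃ρ²`, suppose along the flow line
`ρ > 0`, `ρ` is nondecreasing, `c > 1/√3`, and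
`K' ≥ (1/(ρ F(ρ)²))(2cK − K²/ρ − C)`. If `ρ(0) > 3C` and `K(0) > √3 C`, then
`K(s) > √3 C` for all `s ≥ 0`. -/
theorem static_principal_curvature_barrier
    (F : ℝ → ℝ) (hFpos : ∀ x, 0 < x → 0 < F x)
    (C : ℝ) (hC : 0 < C)
    (ρ c K : ℝ → ℝ)
    (hρdiff : ∀ s, 0 ≤ s → DifferentiableAt ℝ ρ s)
    (hcdiff : ∀ s, 0 ≤ s → DifferentiableAt ℝ c s)
    (hKdiff : ∀ s, 0 ≤ s → DifferentiableAt ℝ K s)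
    (hρpos : ∀ s, 0 ≤ s → 0 < ρ s)
    (hρmono : MonotoneOn ρ (Set.Ici 0))
    (hc : ∀ s, 0 ≤ s → c s > 1 / Real.sqrt 3)
    (hK' : ∀ s, 0 ≤ s → deriv K s ≥
      (1 / (ρ s * (F (ρ s)) ^ 2)) *
        (2 * c s * K s - K s ^ 2 / ρ s - C))
    (hρ0 : ρ 0 > 3 * C)
    (hK0 : K 0 > Real.sqrt 3 * C) :
    ∀ s, 0 ≤ s → K s > Real.sqrt 3 * C :=
  static_principal_curvature_barrier_general F hFpos C hC ρ c K hKdiff hρmono hc hK' hρ0 hK0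
end

section
/- Let m > 0 and define f : ℝ³ \ {0} → ℝ by f(x) = (1 + m/(2|x|))⁻². Then f is twice differentiable on ℝ³ \ {0} and, writing ρ = |x| and F = 1 + m/(2ρ), its Euclidean Hessian satisfies, for every x ≠ 0 and every v ∈ ℝ³: Hess f(x)(v,v) = (m/(ρ³F³))·|v|² − (3m/(ρ³F³))·(1 − m/(2ρF))·⟨v, x/ρ⟩². In particular, since 2ρF = 2ρ + m ≥ m, one has Hess f(x)(v,v) ≤ (m/(ρ³F³))·|v|² ≤ (m/(ρ³F²))·|v|² for every v ∈ ℝ³. -/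
/-!
Away from the origin `f(y) = φ(‖y‖)` with `φ(r) = r² / (r + m/2)²`, and `φ'(r) = ψ(r) r` for
`ψ(r) = m / (r + m/2)³`. So the gradient of `f` is the radial field `ψ(‖y‖) y`, whose derivative is
`ψ(ρ) Id + (ψ'(ρ)/ρ) x ⊗ x`. The identity `ρF = ρ + m/2` turns `ψ(ρ)|v|² + (ψ'(ρ)/ρ)⟨x, v⟩²`
into the stated formula, and `ψ' ≤ 0`, `F ≥ 1` give the bounds.
-/

open scoped RealInnerProductSpace
open Filter Topology

theorem hasDerivAt_inv_sq_one_add_div (m : ℝ) {r : ℝ} (hr : r ≠ 0) (hF : r + m / 2 ≠ 0) :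
    HasDerivAt (fun s : ℝ => ((1 + m / (2 * s)) ^ 2)⁻¹) (m / (r + m / 2) ^ 3 * r) r := by
  have hF' : 1 + m / (2 * r) ≠ 0 := by
    rw [show 1 + m / (2 * r) = (r + m / 2) / r by field_simp]
    exact div_ne_zero hF hr
  have h := (((hasDerivAt_const r m).fun_div ((hasDerivAt_id' r).const_mul 2)
    (by simpa using hr)).const_add 1).fun_pow 2 |>.fun_inv (pow_ne_zero 2 hF')
  refine h.congr_deriv ?_
  norm_num
  field_simp

theorem hasDerivAt_div_add_pow_three (m : ℝ) {r : ℝ} (hF : r + m / 2 ≠ 0) :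
    HasDerivAt (fun s : ℝ => m / (s + m / 2) ^ 3) (-(3 * m) / (r + m / 2) ^ 4) r := by
  have h := (hasDerivAt_const r m).fun_div (((hasDerivAt_id' r).add_const (m / 2)).fun_pow 3)
    (pow_ne_zero 3 hF)
  refine h.congr_deriv ?_
  norm_num
  field_simp

section InnerProductSpace

variable {E : Type*} [NormedAddCommGroup E] [InnerProductSpace ℝ E]

theorem hasFDerivAt_norm_of_ne_zero {x : E} (hx : x ≠ 0) :
    HasFDerivAt (‖·‖) (‖x‖⁻¹ • innerSL ℝ x) x := by
  have h := (Real.hasDerivAt_sqrt (pow_pos (norm_pos_iff.2 hx) 2).ne').comp_hasFDerivAt x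
    (hasStrictFDerivAt_norm_sq x).hasFDerivAt
  simp only [Function.comp_def, Real.sqrt_sq (norm_nonneg _)] at h
  refine h.congr_fderiv ?_
  rw [← Nat.cast_smul_eq_nsmul ℝ, smul_smul, Nat.cast_ofNat]
  congr 1
  field_simp

theorem HasDerivAt.hasFDerivAt_comp_norm {φ : ℝ → ℝ} {φ' : ℝ} {x : E}
    (hφ : HasDerivAt φ φ' ‖x‖) (hx : x ≠ 0) :
    HasFDerivAt (fun y => φ ‖y‖) ((φ' / ‖x‖) • innerSL ℝ x) x := by
  have h := hφ.comp_hasFDerivAt x (hasFDerivAt_norm_of_ne_zero hx)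
  rwa [smul_smul, ← div_eq_mul_inv] at h

-- Over `ℝ` the conjugate-linear map `innerSL ℝ` is definitionally linear; the `show` exposes
-- this so that it can be differentiated as a continuous linear map.
theorem hasFDerivAt_radial_smul_innerSL {ψ : ℝ → ℝ} {ψ' : ℝ} {x : E}
    (hψ : HasDerivAt ψ ψ' ‖x‖) (hx : x ≠ 0) :
    HasFDerivAt (fun y => ψ ‖y‖ • innerSL ℝ y)
      (ψ ‖x‖ • (show E →L[ℝ] E →L[ℝ] ℝ from innerSL ℝ)
        + ((ψ' / ‖x‖) • innerSL ℝ x).smulRight (innerSL ℝ x)) x :=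
  (hψ.hasFDerivAt_comp_norm hx).smul (show E →L[ℝ] E →L[ℝ] ℝ from innerSL ℝ).hasFDerivAt

theorem fderiv_fderiv_apply_of_radial_gradient {f : E → ℝ} {ψ : ℝ → ℝ} {ψ' : ℝ} {x : E}
    (hf : ∀ᶠ y in 𝓝 x, HasFDerivAt f (ψ ‖y‖ • innerSL ℝ y) y) (hψ : HasDerivAt ψ ψ' ‖x‖)
    (hx : x ≠ 0) (v : E) :
    fderiv ℝ (fderiv ℝ f) x v v = ψ ‖x‖ * ‖v‖ ^ 2 + ψ' / ‖x‖ * ⟪x, v⟫ ^ 2 := by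
  have hgrad : fderiv ℝ f =ᶠ[𝓝 x] fun y => ψ ‖y‖ • innerSL ℝ y :=
    hf.mono fun y hy => hy.fderiv
  rw [hgrad.fderiv_eq, (hasFDerivAt_radial_smul_innerSL hψ hx).fderiv]
  change ψ ‖x‖ * ⟪v, v⟫ + ψ' / ‖x‖ * ⟪x, v⟫ * ⟪x, v⟫ = _
  rw [real_inner_self_eq_norm_sq]
  ring

variable {m : ℝ} {f : E → ℝ} {x : E}

theorem hasFDerivAt_of_eq_inv_sq_one_add_div_norm (hm : 0 ≤ m)
    (hf : ∀ x : E, x ≠ 0 → f x = ((1 + m / (2 * ‖x‖)) ^ 2)⁻¹) (hx : x ≠ 0) :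
    HasFDerivAt f ((m / (‖x‖ + m / 2) ^ 3) • innerSL ℝ x) x := by
  have hρ : 0 < ‖x‖ := norm_pos_iff.2 hx
  have h := (hasDerivAt_inv_sq_one_add_div m hρ.ne' (by positivity)).hasFDerivAt_comp_norm hx
  rw [mul_div_cancel_right₀ _ hρ.ne'] at h
  exact h.congr_of_eventuallyEq ((eventually_ne_nhds hx).mono hf)

theorem contDiffAt_of_eq_inv_sq_one_add_div_norm {n : WithTop ℕ∞} (hm : 0 ≤ m)
    (hf : ∀ x : E, x ≠ 0 → f x = ((1 + m / (2 * ‖x‖)) ^ 2)⁻¹) (hx : x ≠ 0) :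
    ContDiffAt ℝ n f x := by
  have hρ : 0 < ‖x‖ := norm_pos_iff.2 hx
  have hF : 0 < 1 + m / (2 * ‖x‖) := by positivity
  have hsmooth : ContDiffAt ℝ n (fun y : E => ((1 + m / (2 * ‖y‖)) ^ 2)⁻¹) x :=
    ((contDiffAt_const.add (contDiffAt_const.div (contDiffAt_const.mul (contDiffAt_norm ℝ hx))
      (by positivity))).pow 2).inv (pow_pos hF 2).ne'
  exact hsmooth.congr_of_eventuallyEq ((eventually_ne_nhds hx).mono hf)

end InnerProductSpace

/-- Hessian computation for `f(x) = (1 + m/(2|x|))⁻²` on `ℝ³ \ {0}`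
(the key computation in the proof of Proposition 5.1). Writing `ρ = |x|` and
`F = 1 + m/(2ρ)`, the function `f` is twice differentiable away from the origin and
`Hess f(x)(v,v) = (m/(ρ³F³))|v|² − (3m/(ρ³F³))(1 − m/(2ρF))⟨v, x/ρ⟩²`; in particular
`Hess f(x)(v,v) ≤ (m/(ρ³F³))|v|² ≤ (m/(ρ³F²))|v|²`. -/
theorem schwarzschild_conformal_hessian
    (m : ℝ) (hm : 0 < m)
    (f : EuclideanSpace ℝ (Fin 3) → ℝ)
    (hf : ∀ x : EuclideanSpace ℝ (Fin 3), x ≠ 0 →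
      f x = ((1 + m / (2 * ‖x‖)) ^ 2)⁻¹) :
    ∀ x : EuclideanSpace ℝ (Fin 3), x ≠ 0 →
      ContDiffAt ℝ 2 f x ∧
      ∀ v : EuclideanSpace ℝ (Fin 3),
        fderiv ℝ (fderiv ℝ f) x v v =
          (m / (‖x‖ ^ 3 * (1 + m / (2 * ‖x‖)) ^ 3)) * ‖v‖ ^ 2
            - (3 * m / (‖x‖ ^ 3 * (1 + m / (2 * ‖x‖)) ^ 3))
              * (1 - m / (2 * ‖x‖ * (1 + m / (2 * ‖x‖))))
              * ⟪v, ‖x‖⁻¹ • x⟫ ^ 2 ∧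
        fderiv ℝ (fderiv ℝ f) x v v ≤
          (m / (‖x‖ ^ 3 * (1 + m / (2 * ‖x‖)) ^ 3)) * ‖v‖ ^ 2 ∧
        fderiv ℝ (fderiv ℝ f) x v v ≤
          (m / (‖x‖ ^ 3 * (1 + m / (2 * ‖x‖)) ^ 2)) * ‖v‖ ^ 2 := by
  intro x hx
  have hρ : 0 < ‖x‖ := norm_pos_iff.2 hx
  have hcube : ‖x‖ ^ 3 * (1 + m / (2 * ‖x‖)) ^ 3 = (‖x‖ + m / 2) ^ 3 := by field_simp
  have hess (v : EuclideanSpace ℝ (Fin 3)) : fderiv ℝ (fderiv ℝ f) x v v =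
      m / (‖x‖ + m / 2) ^ 3 * ‖v‖ ^ 2 + -(3 * m) / (‖x‖ + m / 2) ^ 4 / ‖x‖ * ⟪x, v⟫ ^ 2 :=
    fderiv_fderiv_apply_of_radial_gradient
      ((eventually_ne_nhds hx).mono fun _ hy => hasFDerivAt_of_eq_inv_sq_one_add_div_norm hm.le hf hy)
      (hasDerivAt_div_add_pow_three m (by positivity)) hx v
  have hle (v : EuclideanSpace ℝ (Fin 3)) : fderiv ℝ (fderiv ℝ f) x v v ≤
      (m / (‖x‖ ^ 3 * (1 + m / (2 * ‖x‖)) ^ 3)) * ‖v‖ ^ 2 := by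
    have hψ' : -(3 * m) / (‖x‖ + m / 2) ^ 4 / ‖x‖ ≤ 0 := by
      rw [neg_div, neg_div]
      exact neg_nonpos.2 (by positivity)
    rw [hess, hcube]
    nlinarith [mul_nonpos_of_nonpos_of_nonneg hψ' (sq_nonneg ⟪x, v⟫)]
  refine ⟨contDiffAt_of_eq_inv_sq_one_add_div_norm hm.le hf hx,
    fun v => ⟨?_, hle v, (hle v).trans ?_⟩⟩
  · rw [hess, real_inner_smul_right, real_inner_comm, hcube]
    field_simp
    ring
  · have hF : 1 ≤ 1 + m / (2 * ‖x‖) := le_add_of_nonneg_right (by positivity)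
    gcongr
    norm_num
end

section
/- Let m > 0 and e ∈ ℝ with e² ≤ m², set r₊ = m + √(m² − e²) and V(r) = √(1 − 2m/r + e²/r²) for r > r₊. Suppose ρ : (r₊, ∞) → (0, ∞) is differentiable and satisfies ρ'(r) = ρ(r)/(r·V(r)) for all r > r₊. Then ρ is strictly increasing, the limit L = lim_{r→∞} ρ(r)/r exists and satisfies 0 < L < ∞, and consequently there exist constants C > c > 0 and r₁ > r₊ such that c·r ≤ ρ(r) ≤ C·r for all r ≥ r₁. -/
/-!
Writing `ρ(r) = r · exp g(r)`, the ODE becomes `g' = (1 - V) / (r V)`, which for large `r` lies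
between `0` and `4m/r²`. So `g` is eventually monotone and bounded, hence convergent, and
`ρ(r)/r = exp g(r)` tends to a positive limit.
-/

open Filter Set Topology

theorem MonotoneOn.exists_tendsto_atTop_of_le {g : ℝ → ℝ} {a B : ℝ}
    (hg : MonotoneOn g (Ici a)) (hB : ∀ x, a ≤ x → g x ≤ B) :
    ∃ L, Tendsto g atTop (𝓝 L) := by
  have hmono : Monotone fun x => g (max x a) := fun x y hxy =>
    hg (le_max_right x a) (le_max_right y a) (max_le_max hxy le_rfl)
  have hbdd : BddAbove (range fun x => g (max x a)) := by
    refine ⟨B, ?_⟩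
    rintro _ ⟨x, rfl⟩
    exact hB _ (le_max_right x a)
  refine ⟨_, (tendsto_atTop_ciSup hmono hbdd).congr' ?_⟩
  filter_upwards [eventually_ge_atTop a] with x hx
  rw [max_eq_left hx]

theorem exists_tendsto_of_hasDerivAt_mem_Icc_div_sq {g g' : ℝ → ℝ} {a K : ℝ} (ha : 0 < a)
    (hg : ∀ x, a ≤ x → HasDerivAt g (g' x) x)
    (hg' : ∀ x, a ≤ x → g' x ∈ Icc 0 (K / x ^ 2)) :
    ∃ L, Tendsto g atTop (𝓝 L) := by
  have hcont : ContinuousOn g (Ici a) := fun x hx => (hg x hx).continuousAt.continuousWithinAt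
  have hmono : MonotoneOn g (Ici a) :=
    monotoneOn_of_hasDerivWithinAt_nonneg (convex_Ici a) hcont
      (fun x hx => (hg x (interior_subset hx)).hasDerivWithinAt)
      (fun x hx => (hg' x (interior_subset hx)).1)
  -- `g + K/x` has nonpositive derivative, which bounds `g` from above.
  have hanti : AntitoneOn (fun x => g x + K * x⁻¹) (Ici a) := by
    refine antitoneOn_of_hasDerivWithinAt_nonpos (convex_Ici a)
      (fun x hx => ((hg x hx).add ((hasDerivAt_inv (ha.trans_le hx).ne').const_mul K))
        |>.continuousAt.continuousWithinAt)
      (fun x hx => ((hg x (interior_subset hx)).add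
        ((hasDerivAt_inv (ha.trans_le (interior_subset hx)).ne').const_mul K)).hasDerivWithinAt)
      (fun x hx => ?_)
    have := (hg' x (interior_subset hx)).2
    rw [div_eq_mul_inv] at this
    linarith
  have hK : 0 ≤ K := by
    have := mul_nonneg ((hg' a le_rfl).1.trans (hg' a le_rfl).2) (sq_nonneg a)
    rwa [div_mul_cancel₀ _ (by positivity)] at this
  refine hmono.exists_tendsto_atTop_of_le (B := g a + K * a⁻¹) fun x hx => ?_
  have := hanti (mem_Ici.2 le_rfl) hx hx
  have : 0 ≤ K * x⁻¹ := mul_nonneg hK (inv_nonneg.2 (ha.le.trans hx))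
  linarith

theorem exists_mul_le_and_le_mul_of_tendsto_div {f : ℝ → ℝ} {L : ℝ} (hL : 0 < L)
    (hf : Tendsto (fun r => f r / r) atTop (𝓝 L)) (b : ℝ) :
    ∃ C c r₁ : ℝ, 0 < c ∧ c < C ∧ b < r₁ ∧ ∀ r, r₁ ≤ r → c * r ≤ f r ∧ f r ≤ C * r := by
  obtain ⟨r₁, hr₁⟩ := eventually_atTop.1 <|
    (hf.eventually (Ioo_mem_nhds (half_lt_self hL) (by linarith : L < 2 * L))).and
      ((eventually_gt_atTop b).and (eventually_gt_atTop 0))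
  refine ⟨2 * L, L / 2, r₁, half_pos hL, by linarith, (hr₁ r₁ le_rfl).2.1, fun r hr => ?_⟩
  obtain ⟨⟨hlo, hhi⟩, -, hr0⟩ := hr₁ r hr
  exact ⟨((lt_div_iff₀ hr0).1 hlo).le, ((div_lt_iff₀ hr0).1 hhi).le⟩

theorem HasDerivAt.log_sub_log {ρ : ℝ → ℝ} {r w : ℝ} (hρ : HasDerivAt ρ (ρ r / (r * w)) r)
    (hρ0 : ρ r ≠ 0) (hr : r ≠ 0) :
    HasDerivAt (fun x => Real.log (ρ x) - Real.log x) (1 / (r * w) - 1 / r) r :=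
  ((hρ.log hρ0).sub (Real.hasDerivAt_log hr)).congr_deriv <| by
    rw [div_div_cancel_left' hρ0, one_div, one_div]

noncomputable def rnLapse (m e r : ℝ) : ℝ := √(1 - 2 * m / r + e ^ 2 / r ^ 2)

section rnLapse

variable {m e r : ℝ}

theorem rnLapse_pos (hr : m + √(m ^ 2 - e ^ 2) < r) : 0 < rnLapse m e r := by
  refine Real.sqrt_pos.2 ?_
  rcases eq_or_ne r 0 with rfl | hr0
  · simp
  have hs : m ^ 2 - e ^ 2 ≤ √(m ^ 2 - e ^ 2) ^ 2 := Real.sq_sqrt' ▸ le_max_left _ _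
  -- `(r - m)² > √(m² - e²)² ≥ m² - e²`, also when `m² < e²`.
  have hquad : 0 < r ^ 2 - 2 * m * r + e ^ 2 := by
    nlinarith [Real.sqrt_nonneg (m ^ 2 - e ^ 2)]
  have : 1 - 2 * m / r + e ^ 2 / r ^ 2 = (r ^ 2 - 2 * m * r + e ^ 2) / r ^ 2 := by
    field_simp
  rw [this]
  positivity

theorem half_le_rnLapse (hr : 0 < r) (h4m : 4 * m ≤ r) : 1 / 2 ≤ rnLapse m e r := by
  refine (Real.le_sqrt (by norm_num) ?_).2 ?_ <;>
  · have : 2 * m / r ≤ 1 / 2 := by rw [div_le_iff₀ hr]; linarith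
    have : 0 ≤ e ^ 2 / r ^ 2 := by positivity
    linarith

theorem rnLapse_le_one (hr : 0 < r) (he : e ^ 2 ≤ 2 * m * r) : rnLapse m e r ≤ 1 := by
  refine Real.sqrt_le_one.2 ?_
  have : e ^ 2 / r ^ 2 ≤ 2 * m / r := by
    rw [div_le_div_iff₀ (by positivity) hr]
    nlinarith
  linarith

theorem one_div_mul_rnLapse_sub_one_div_mem_Icc (hr : 0 < r) (h4m : 4 * m ≤ r)
    (he : e ^ 2 ≤ 2 * m * r) :
    1 / (r * rnLapse m e r) - 1 / r ∈ Icc 0 (4 * m / r ^ 2) := by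
  set V := rnLapse m e r
  have hV0 : 1 / 2 ≤ V := half_le_rnLapse hr h4m
  have hV1 : V ≤ 1 := rnLapse_le_one hr he
  have hVsq : V ^ 2 = 1 - 2 * m / r + e ^ 2 / r ^ 2 :=
    Real.sq_sqrt (Real.sqrt_pos.1 (by linarith : 0 < V)).le
  have hsplit : 1 / (r * V) - 1 / r = (1 - V) / (r * V) := by field_simp
  rw [hsplit]
  constructor
  · exact div_nonneg (by linarith) (by positivity)
  -- `1 - V ≤ 1 - V² = 2m/r - e²/r²`, and `rV ≥ r/2`.
  have hnum : 1 - V ≤ 2 * m / r := by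
    have : 0 ≤ e ^ 2 / r ^ 2 := by positivity
    nlinarith
  calc (1 - V) / (r * V) ≤ (2 * m / r) / (r * (1 / 2)) :=
        div_le_div₀ ((sub_nonneg.2 hV1).trans hnum) hnum (by positivity) (by gcongr)
    _ = 4 * m / r ^ 2 := by field_simp; ring

end rnLapse

theorem reissner_nordstrom_isothermal_radius_comparable_general
    (m e : ℝ) (hm : 0 < m)
    (rp : ℝ) (hrp : rp = m + Real.sqrt (m ^ 2 - e ^ 2))
    (V : ℝ → ℝ) (hV : ∀ r, V r = Real.sqrt (1 - 2 * m / r + e ^ 2 / r ^ 2))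
    (ρ : ℝ → ℝ)
    (hρpos : ∀ r, rp < r → 0 < ρ r)
    (hρ' : ∀ r, rp < r → HasDerivAt ρ (ρ r / (r * V r)) r) :
    StrictMonoOn ρ (Set.Ioi rp) ∧
      (∃ L : ℝ, 0 < L ∧ Tendsto (fun r => ρ r / r) atTop (nhds L)) ∧
      ∃ C c r₁ : ℝ, 0 < c ∧ c < C ∧ rp < r₁ ∧
        ∀ r, r₁ ≤ r → c * r ≤ ρ r ∧ ρ r ≤ C * r := by
  obtain rfl : V = rnLapse m e := funext hV
  have hr0 : ∀ r, rp < r → 0 < r := fun r =>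
    (hrp ▸ add_pos_of_pos_of_nonneg hm (Real.sqrt_nonneg _)).trans
  have hmono : StrictMonoOn ρ (Ioi rp) :=
    strictMonoOn_of_hasDerivWithinAt_pos (convex_Ioi rp)
      (fun r hr => (hρ' r hr).continuousAt.continuousWithinAt)
      (fun r hr => (hρ' r (interior_subset hr)).hasDerivWithinAt)
      (fun r hr => have hr : rp < r := interior_subset hr
        div_pos (hρpos r hr) (mul_pos (hr0 r hr) (rnLapse_pos (hrp ▸ hr))))
  obtain ⟨r₀, hr₀, h4m, he⟩ : ∃ r₀, rp < r₀ ∧ 4 * m ≤ r₀ ∧ e ^ 2 / (2 * m) ≤ r₀ :=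
    ((eventually_gt_atTop rp).and
      ((eventually_ge_atTop _).and (eventually_ge_atTop _))).exists
  obtain ⟨ℓ, hℓ⟩ := exists_tendsto_of_hasDerivAt_mem_Icc_div_sq (hr0 r₀ hr₀)
    (fun r hr => (hρ' r (hr₀.trans_le hr)).log_sub_log (hρpos r (hr₀.trans_le hr)).ne'
      (hr0 r (hr₀.trans_le hr)).ne')
    (fun r hr => one_div_mul_rnLapse_sub_one_div_mem_Icc (hr0 r (hr₀.trans_le hr))
      (h4m.trans hr) (by rw [div_le_iff₀ (by positivity)] at he; nlinarith))
  have hlim : Tendsto (fun r => ρ r / r) atTop (𝓝 (Real.exp ℓ)) := by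
    refine ((Real.continuous_exp.tendsto ℓ).comp hℓ).congr' ?_
    filter_upwards [eventually_gt_atTop rp] with r hr
    simp only [Function.comp_apply, Real.exp_sub, Real.exp_log (hρpos r hr),
      Real.exp_log (hr0 r hr)]
  exact ⟨hmono, ⟨_, Real.exp_pos ℓ, hlim⟩,
    exists_mul_le_and_le_mul_of_tendsto_div (Real.exp_pos ℓ) hlim rp⟩

/-- The isothermal radial coordinate of the Reissner–Nordstrom manifold
of mass `m > 0` and charge `e` with `e² ≤ m²`: if `ρ` is positive on `(r₊, ∞)` and
solves `ρ' = ρ/(rV(r))` there, where `V(r) = √(1 − 2m/r + e²/r²)` and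
`r₊ = m + √(m² − e²)`, then `ρ` is strictly increasing, `ρ(r)/r` tends to a finite
positive limit `L` as `r → ∞`, and consequently `c·r ≤ ρ(r) ≤ C·r` for some
constants `C > c > 0` and all sufficiently large `r`. -/
theorem reissner_nordstrom_isothermal_radius_comparable
    (m e : ℝ) (hm : 0 < m) (he : e ^ 2 ≤ m ^ 2)
    (rp : ℝ) (hrp : rp = m + Real.sqrt (m ^ 2 - e ^ 2))
    (V : ℝ → ℝ) (hV : ∀ r, V r = Real.sqrt (1 - 2 * m / r + e ^ 2 / r ^ 2))
    (ρ : ℝ → ℝ)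
    (hρpos : ∀ r, rp < r → 0 < ρ r)
    (hρ' : ∀ r, rp < r → HasDerivAt ρ (ρ r / (r * V r)) r) :
    StrictMonoOn ρ (Set.Ioi rp) ∧
      (∃ L : ℝ, 0 < L ∧ Tendsto (fun r => ρ r / r) atTop (nhds L)) ∧
      ∃ C c r₁ : ℝ, 0 < c ∧ c < C ∧ rp < r₁ ∧
        ∀ r, r₁ ≤ r → c * r ≤ ρ r ∧ ρ r ≤ C * r :=
  reissner_nordstrom_isothermal_radius_comparable_general m e hm rp hrp V hV ρ hρpos hρ'
end

section
/- Let m > 0 and e ∈ ℝ with e² ≤ m², set r₊ = m + √(m² − e²) and V(r) = √(1 − 2m/r + e²/r²) for r > r₊. Suppose ρ : (r₊, ∞) → (0, ∞) is differentiable and satisfies ρ'(r) = ρ(r)/(r·V(r)) for all r > r₊. Then the function r ↦ r/ρ(r) is strictly decreasing on (r₊, ∞). Equivalently, the conformal factor F, defined by F² = r/ρ as a function of the isothermal radius ρ, satisfies ∂F/∂ρ < 0. -/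
/-!
Since `ρ' = ρ / (r V)`, the derivative of `r / ρ` is `(1 - 1/V) / ρ`, which is negative as soon as
`0 < V < 1`. Outside the outer horizon `r₊` the quadratic `r² - 2mr + e² = (r - m)² - (m² - e²)` is
positive, and it is less than `r²` because `2mr > 2m² ≥ e²`; hence `V² ∈ (0, 1)`.
-/

open Set

theorem strictAntiOn_id_div_of_lt_mul_deriv {s : Set ℝ} (hs : Convex ℝ s) {ρ ρ' : ℝ → ℝ}
    (hpos : ∀ x ∈ s, 0 < ρ x) (hderiv : ∀ x ∈ s, HasDerivAt ρ (ρ' x) x)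
    (hlt : ∀ x ∈ s, ρ x < x * ρ' x) : StrictAntiOn (fun x => x / ρ x) s := by
  have hquot : ∀ x ∈ s,
      HasDerivAt (fun x => x / ρ x) ((1 * ρ x - x * ρ' x) / ρ x ^ 2) x := fun x hx =>
    (hasDerivAt_id x).div (hderiv x hx) (hpos x hx).ne'
  refine strictAntiOn_of_hasDerivWithinAt_neg hs
    (fun x hx => (hquot x hx).continuousAt.continuousWithinAt)
    (fun x hx => (hquot x (interior_subset hx)).hasDerivWithinAt) fun x hx => ?_
  have hx := interior_subset hx
  exact div_neg_of_neg_of_pos (by linarith [hlt x hx]) (pow_pos (hpos x hx) 2)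

theorem reissnerNordstrom_lapse_sq_mem_Ioo {m e r : ℝ} (hm : 0 < m) (he : e ^ 2 ≤ m ^ 2)
    (hr : m + √(m ^ 2 - e ^ 2) < r) : 1 - 2 * m / r + e ^ 2 / r ^ 2 ∈ Ioo 0 1 := by
  have hs : √(m ^ 2 - e ^ 2) ^ 2 = m ^ 2 - e ^ 2 := Real.sq_sqrt (by linarith)
  have hs₀ : 0 ≤ √(m ^ 2 - e ^ 2) := Real.sqrt_nonneg _
  have hr₀ : 0 < r := by linarith
  have hquad_pos : 0 < r ^ 2 - 2 * m * r + e ^ 2 := by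
    nlinarith [mul_pos (by linarith : 0 < r - m - √(m ^ 2 - e ^ 2))
      (by linarith : 0 < r - m + √(m ^ 2 - e ^ 2))]
  have hquad_lt : r ^ 2 - 2 * m * r + e ^ 2 < r ^ 2 := by nlinarith
  have hform : 1 - 2 * m / r + e ^ 2 / r ^ 2 = (r ^ 2 - 2 * m * r + e ^ 2) / r ^ 2 := by
    field_simp
  rw [hform]
  exact ⟨by positivity, (div_lt_one (by positivity)).mpr hquad_lt⟩

/-- For the isothermal radial coordinate `ρ` of the Reissner–Nordstrom
manifold of mass `m > 0` and charge `e` with `e² ≤ m²` (so `ρ' = ρ/(rV(r))` on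
`(r₊, ∞)`, where `V(r) = √(1 − 2m/r + e²/r²)` and `r₊ = m + √(m² − e²)`), the
function `r ↦ r/ρ(r)` is strictly decreasing on `(r₊, ∞)`; equivalently, the
conformal factor `F` with `F² = r/ρ` satisfies `∂F/∂ρ < 0`. -/
theorem reissner_nordstrom_conformal_factor_decreasing
    (m e : ℝ) (hm : 0 < m) (he : e ^ 2 ≤ m ^ 2)
    (rp : ℝ) (hrp : rp = m + Real.sqrt (m ^ 2 - e ^ 2))
    (V : ℝ → ℝ) (hV : ∀ r, V r = Real.sqrt (1 - 2 * m / r + e ^ 2 / r ^ 2))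
    (ρ : ℝ → ℝ)
    (hρpos : ∀ r, rp < r → 0 < ρ r)
    (hρ' : ∀ r, rp < r → HasDerivAt ρ (ρ r / (r * V r)) r) :
    StrictAntiOn (fun r => r / ρ r) (Set.Ioi rp) := by
  refine strictAntiOn_id_div_of_lt_mul_deriv (convex_Ioi rp) hρpos hρ' fun r hr => ?_
  have hr' : m + √(m ^ 2 - e ^ 2) < r := hrp ▸ hr
  have hr₀ : 0 < r := by linarith [Real.sqrt_nonneg (m ^ 2 - e ^ 2)]
  obtain ⟨hlapse_pos, hlapse_lt⟩ := reissnerNordstrom_lapse_sq_mem_Ioo hm he hr'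
  have hV₀ : 0 < V r := hV r ▸ Real.sqrt_pos.mpr hlapse_pos
  have hV₁ : V r < 1 := hV r ▸ (Real.sqrt_lt' one_pos).mpr (by simpa using hlapse_lt)
  calc ρ r < ρ r / V r := (lt_div_iff₀ hV₀).mpr (mul_lt_of_lt_one_right (hρpos r hr) hV₁)
    _ = r * (ρ r / (r * V r)) := by field_simp
end
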